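/- Let X be a subshift over a finite alphabet Λ. The maps Ξ : X → Ω_X, Ξ(x) = ξ_x, and σ : Ω_X → X (the stem) are equivariant with respect to the standard partial action θ on X and the spectral partial action ϑ on Ω_X; that is, for every g ∈ 𝔽: (a) Ξ(X_g) ⊆ Ω_g and Ξ(θ_g(x)) = g·Ξ(x) for all x ∈ X_{g⁻¹}; (b) σ(Ω_g) ⊆ X_g and σ(gξ) = θ_g(σ(ξ)) for all ξ ∈ Ω_{g⁻¹}. -/

import Mathlib

open scoped Classical

namespace SubshiftPaper

variable {Λ : Type}

/-- The left shift on infinite words. -/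
def shiftMap (x : ℕ → Λ) : ℕ → Λ := fun n => x (n + 1)

/-- Concatenation of a finite word with an infinite word. -/
def cat (α : List Λ) (y : ℕ → Λ) : ℕ → Λ := fun n => α.getD n (y (n - α.length))

/-- `α` is a prefix of the infinite word `x`. -/
def Pref (α : List Λ) (x : ℕ → Λ) : Prop := ∀ (i : ℕ) (h : i < α.length), x i = α[i]

/-- The tail of `x` after `n` letters. -/
def tail (x : ℕ → Λ) (n : ℕ) : ℕ → Λ := fun i => x (n + i)

/-- `α` occurs in `x` at position `n`. -/
def OccursAt (α : List Λ) (x : ℕ → Λ) (n : ℕ) : Prop :=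
  ∀ (i : ℕ) (h : i < α.length), x (n + i) = α[i]

/-- `α` occurs in `x` (as a contiguous block of letters). -/
def Occurs (α : List Λ) (x : ℕ → Λ) : Prop := ∃ n, OccursAt α x n

/-- `X` is a subshift: a nonempty closed shift-invariant subset. -/
def IsSubshift [TopologicalSpace Λ] (X : Set (ℕ → Λ)) : Prop :=
  X.Nonempty ∧ IsClosed X ∧ ∀ x ∈ X, shiftMap x ∈ X

/-- The set of infinite words avoiding all words in `F`. -/
def ForbidSpace (F : Set (List Λ)) : Set (ℕ → Λ) := {x | ∀ α ∈ F, ¬ Occurs α x}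

/-- `X` is a subshift of finite type. -/
def IsSFT (X : Set (ℕ → Λ)) : Prop := ∃ F : Set (List Λ), F.Finite ∧ X = ForbidSpace F

/-- The follower set of a finite word. -/
def follower (X : Set (ℕ → Λ)) (α : List Λ) : Set (ℕ → Λ) := {y | y ∈ X ∧ cat α y ∈ X}

/-- The cylinder of a finite word. -/
def cylinder (X : Set (ℕ → Λ)) (α : List Λ) : Set (ℕ → Λ) := {x | x ∈ X ∧ Pref α x}

/-- The language of `X`. -/
def Language (X : Set (ℕ → Λ)) : Set (List Λ) := {α | ∃ x ∈ X, Occurs α x}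

/-- The embedding of finite words into the free group. -/
def wd (α : List Λ) : FreeGroup Λ := (α.map FreeGroup.of).prod

/-- Indicator function of a set of group elements. -/
noncomputable def chi (s : Set (FreeGroup Λ)) : FreeGroup Λ → Bool :=
  fun g => if g ∈ s then true else false

/-- The set `ξ_x ⊆ 𝔽`. -/
def xiSet [DecidableEq Λ] (X : Set (ℕ → Λ)) (x : ℕ → Λ) : Set (FreeGroup Λ) :=
  {g | ∃ α β : List Λ, g = wd α * (wd β)⁻¹ ∧
        FreeGroup.norm g = α.length + β.length ∧
        Pref α x ∧ tail x α.length ∈ follower X α ∩ follower X β}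

/-- `ξ_x` as an element of `2^𝔽`. -/
noncomputable def xiB [DecidableEq Λ] (X : Set (ℕ → Λ)) (x : ℕ → Λ) : FreeGroup Λ → Bool :=
  chi (xiSet X x)

/-- The spectrum `Ω_X`: the closure of `{ξ_x : x ∈ X}` in `2^𝔽`. -/
noncomputable def Omega [DecidableEq Λ] (X : Set (ℕ → Λ)) : Set (FreeGroup Λ → Bool) :=
  closure ((fun x => xiB X x) '' X)

/-- Left translation of an element of `2^𝔽`. -/
def translate (g : FreeGroup Λ) (ξ : FreeGroup Λ → Bool) : FreeGroup Λ → Bool :=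
  fun h => ξ (g⁻¹ * h)

/-- `x` is the stem of `ξ`: `ξ ∩ 𝔽₊` is exactly the set of prefixes of `x`. -/
def IsStem (ξ : FreeGroup Λ → Bool) (x : ℕ → Λ) : Prop :=
  {g | ξ g = true} ∩ {g | ∃ α : List Λ, g = wd α} =
    {g | ∃ α : List Λ, g = wd α ∧ Pref α x}

/-- `x` is the stem of `ξ` at `g`: `ξ ∩ g𝔽₊ = {gα : α is a prefix of x}`. -/
def IsStemAt (ξ : FreeGroup Λ → Bool) (g : FreeGroup Λ) (x : ℕ → Λ) : Prop :=
  {h | ξ h = true} ∩ {h | ∃ α : List Λ, h = g * wd α} =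
    {h | ∃ α : List Λ, h = g * wd α ∧ Pref α x}

/-- The orbit of `ξ` under the spectral partial action. -/
def Orbit (ξ : FreeGroup Λ → Bool) : Set (FreeGroup Λ → Bool) :=
  {η | ∃ g : FreeGroup Λ, ξ g⁻¹ = true ∧ η = translate g ξ}

/-- Topological freeness of the spectral partial action. -/
noncomputable def TopFree [DecidableEq Λ] (X : Set (ℕ → Λ)) : Prop :=
  ∀ g : FreeGroup Λ, g ≠ 1 →
    ∀ U : Set (FreeGroup Λ → Bool), IsOpen U →
      (U ∩ Omega X ⊆ {ξ | ξ g⁻¹ = true ∧ translate g ξ = ξ}) → U ∩ Omega X = ∅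

/-- The periodic infinite word `γ^∞`. -/
noncomputable def perInf [Nonempty Λ] (γ : List Λ) : ℕ → Λ :=
  fun n => γ.getD (n % γ.length) (Classical.arbitrary Λ)

/-- `n`-fold concatenation of a finite word with itself. -/
def rep : ℕ → List Λ → List Λ
  | 0, _ => []
  | n + 1, γ => γ ++ rep n γ

/-- `γ` is a circuit relative to `X`. -/
noncomputable def IsCircuit [Nonempty Λ] (X : Set (ℕ → Λ)) (γ : List Λ) : Prop :=
  γ ≠ [] ∧ perInf γ ∈ X

/-- `y` is an exit for the circuit `γ`. -/
noncomputable def IsExit [Nonempty Λ] (X : Set (ℕ → Λ)) (γ : List Λ) (y : ℕ → Λ) : Prop :=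
  y ≠ perInf γ ∧ cat γ y ∈ X

/-- `z` is a strong exit for the circuit `γ`. -/
noncomputable def IsStrongExit [Nonempty Λ] (X : Set (ℕ → Λ)) (γ : List Λ) (z : ℕ → Λ) : Prop :=
  z ≠ perInf γ ∧ ∀ n : ℕ, cat (rep n γ) z ∈ X

/-- The sets `X_g` of the standard partial action. -/
def Xg [DecidableEq Λ] (X : Set (ℕ → Λ)) (g : FreeGroup Λ) : Set (ℕ → Λ) :=
  {x | ∃ α β : List Λ, g = wd α * (wd β)⁻¹ ∧
        FreeGroup.norm g = α.length + β.length ∧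
        ∃ y ∈ follower X α ∩ follower X β, x = cat α y}

/-- `x` is a fixed point for `θ_g`. -/
def IsThetaFixed [DecidableEq Λ] (X : Set (ℕ → Λ)) (g : FreeGroup Λ) (x : ℕ → Λ) : Prop :=
  ∃ α β : List Λ, g = wd α * (wd β)⁻¹ ∧
    FreeGroup.norm g = α.length + β.length ∧
    ∃ y ∈ follower X α ∩ follower X β, x = cat β y ∧ cat α y = x

/-- `x` may be collectively reached from the finite set `B`. -/
def CollReached (X : Set (ℕ → Λ)) (B : Finset (List Λ)) (x : ℕ → Λ) : Prop :=
  ∃ α γ : List Λ, Pref α x ∧ ∀ β ∈ B, cat (β ++ γ) (tail x α.length) ∈ X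

/-- `X` is collectively cofinal. -/
def CollCofinal (X : Set (ℕ → Λ)) : Prop :=
  ∀ B : Finset (List Λ), ↑B ⊆ Language X → (⋂ β ∈ B, follower X β).Nonempty →
    ∀ x ∈ X, CollReached X B x

/-- `X` is strongly cofinal. -/
def StrongCofinal (X : Set (ℕ → Λ)) : Prop :=
  ∀ β ∈ Language X, ∃ M : ℕ, ∀ x ∈ X, ∃ α γ : List Λ, Pref α x ∧
    cat (β ++ γ) (tail x α.length) ∈ X ∧ α.length + γ.length ≤ M

/-- The even shift. -/
def evenShift : Set (ℕ → Fin 2) :=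
  ForbidSpace {w | ∃ n : ℕ, w = 0 :: (List.replicate (2 * n + 1) 1 ++ [0])}

/-!
Everything rests on the identity `ξ_x = {g | x ∈ X_g}`. Since common last letters of a
presentation `g = γ δ⁻¹` cancel into the tail, `γ (F_γ ∩ F_δ) ⊆ X_g` holds for every
presentation, reduced or not; this gives `θ_g (X_{g⁻¹} ∩ X_h) ⊆ X_{gh}`, which is the
equivariance of `Ξ`. For the stem `x` of `ξ ∈ Ω_X`: the prefixes of `x` lie in `ξ`, so any
`ξ_{x'}` that agrees with `ξ` on a large enough finite set has `x'` close to `x`. If `g ∈ ξ`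
such `x'` lie in `X_g`, which is closed, hence `x ∈ X_g`; and for `g⁻¹ ∈ ξ` the equivariance
of `Ξ` at `x'` identifies the positive words in `g ξ`.
-/

section Words

theorem cat_apply_lt (α : List Λ) (y : ℕ → Λ) {i : ℕ} (h : i < α.length) :
    cat α y i = α[i] := by
  simp [cat, h]

theorem cat_apply_of_le (α : List Λ) (y : ℕ → Λ) {i : ℕ} (h : α.length ≤ i) :
    cat α y i = y (i - α.length) := by
  simp [cat, List.getElem?_eq_none h]

@[simp]
theorem cat_nil (y : ℕ → Λ) : cat [] y = y := by
  funext n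
  simp [cat]

theorem cat_append (u v : List Λ) (z : ℕ → Λ) : cat (u ++ v) z = cat u (cat v z) := by
  funext n
  rcases lt_or_ge n u.length with h | h
  · rw [cat_apply_lt _ _ (by simp; omega), cat_apply_lt _ _ h, List.getElem_append_left h]
  rw [cat_apply_of_le u _ h]
  rcases lt_or_ge n (u.length + v.length) with h' | h'
  · rw [cat_apply_lt _ _ (by simp; omega), cat_apply_lt _ _ (by omega),
      List.getElem_append_right h]
  · rw [cat_apply_of_le _ _ (by simp; omega), cat_apply_of_le _ _ (by omega)]
    simp only [List.length_append]
    congr 1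
    omega

@[simp]
theorem tail_cat (α : List Λ) (y : ℕ → Λ) : tail (cat α y) α.length = y := by
  funext i
  simp [tail, cat_apply_of_le]

theorem pref_cat (α : List Λ) (y : ℕ → Λ) : Pref α (cat α y) := fun _ h => cat_apply_lt α y h

theorem cat_tail_of_pref {α : List Λ} {x : ℕ → Λ} (h : Pref α x) :
    cat α (tail x α.length) = x := by
  funext n
  rcases lt_or_ge n α.length with hn | hn
  · rw [cat_apply_lt α _ hn, h n hn]
  · rw [cat_apply_of_le α _ hn, tail]
    congr 1
    omega

theorem cat_injective (α : List Λ) : Function.Injective (cat α) := fun y z h => by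
  rw [← tail_cat α y, h, tail_cat]

theorem eq_of_pref_of_pref {α β : List Λ} {x : ℕ → Λ} (hα : Pref α x) (hβ : Pref β x)
    (h : α.length = β.length) : α = β :=
  List.ext_getElem h fun i hi hi' => by rw [← hα i hi, ← hβ i hi']

theorem exists_append_of_cat_eq_cat {β γ : List Λ} {y z : ℕ → Λ} (h : cat β y = cat γ z)
    (hle : γ.length ≤ β.length) : ∃ ρ, β = γ ++ ρ ∧ z = cat ρ y := by
  refine ⟨β.drop γ.length, ?_⟩
  have htake : β.take γ.length = γ := by
    refine eq_of_pref_of_pref (x := cat β y) (fun i hi => ?_) (h ▸ pref_cat γ z)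
      (by simp; omega)
    simp only [List.length_take] at hi
    rw [cat_apply_lt _ _ (by omega), List.getElem_take]
  have hβ : β = γ ++ β.drop γ.length := by
    conv_lhs => rw [← List.take_append_drop γ.length β, htake]
  refine ⟨hβ, cat_injective γ ?_⟩
  rw [← h, ← cat_append, ← hβ]

theorem pref_iff_of_mem_cylinder {ρ : List Λ} {x y : ℕ → Λ}
    (h : x ∈ PiNat.cylinder y ρ.length) : Pref ρ x ↔ Pref ρ y := by
  rw [PiNat.mem_cylinder_iff] at h
  exact forall₂_congr fun i hi => by rw [h i hi]

theorem cat_mem_cylinder_cat_iff {α : List Λ} {y z : ℕ → Λ} {n : ℕ} :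
    cat α z ∈ PiNat.cylinder (cat α y) (α.length + n) ↔ z ∈ PiNat.cylinder y n := by
  simp only [PiNat.mem_cylinder_iff]
  constructor
  · intro h i hi
    simpa [cat_apply_of_le] using h (α.length + i) (by omega)
  · intro h i hi
    rcases lt_or_ge i α.length with hiα | hiα
    · rw [cat_apply_lt _ _ hiα, cat_apply_lt _ _ hiα]
    · rw [cat_apply_of_le _ _ hiα, cat_apply_of_le _ _ hiα, h _ (by omega)]

end Words

section ReducedForm

open FreeGroup

theorem wd_append (u v : List Λ) : wd (u ++ v) = wd u * wd v := by
  simp [wd]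

theorem wd_eq_mk (α : List Λ) : wd α = mk (α.map fun a => (a, true)) := by
  induction α with
  | nil => rfl
  | cons a α ih =>
    rw [← List.singleton_append, wd_append, ih, List.map_append, ← mul_mk]
    rfl

theorem wd_mul_inv_wd_eq_mk (α β : List Λ) :
    wd α * (wd β)⁻¹ = mk (α.map (fun a => (a, true)) ++ invRev (β.map fun a => (a, true))) := by
  rw [wd_eq_mk, wd_eq_mk, inv_mk, mul_mk]

theorem invRev_map_true (β : List Λ) :
    invRev (β.map fun a => (a, true)) = (β.map fun a => (a, false)).reverse := by
  simp [invRev, Function.comp_def]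

theorem isReduced_wd_mul_inv_wd {α β : List Λ}
    (h : ∀ a ∈ α.getLast?, ∀ b ∈ β.getLast?, a ≠ b) :
    FreeGroup.IsReduced (α.map (fun a => (a, true)) ++ invRev (β.map fun a => (a, true))) := by
  rw [FreeGroup.IsReduced, List.isChain_append, invRev_map_true, List.isChain_reverse]
  refine ⟨(List.isChain_map _).2 (List.pairwise_of_forall fun _ _ _ => rfl).isChain,
    (List.isChain_map _).2 (List.pairwise_of_forall fun _ _ _ => rfl).isChain,
    fun p hp q hq => ?_⟩
  simp only [List.getLast?_map, Option.mem_def, Option.map_eq_some_iff] at hp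
  simp only [List.head?_reverse, List.getLast?_map, Option.mem_def,
    Option.map_eq_some_iff] at hq
  obtain ⟨a, ha, rfl⟩ := hp
  obtain ⟨b, hb, rfl⟩ := hq
  simpa using h a ha b hb

variable [DecidableEq Λ]

theorem norm_wd_mul_inv_wd {α β : List Λ} (h : ∀ a ∈ α.getLast?, ∀ b ∈ β.getLast?, a ≠ b) :
    norm (wd α * (wd β)⁻¹) = α.length + β.length := by
  rw [FreeGroup.norm, wd_mul_inv_wd_eq_mk, toWord_mk, (isReduced_wd_mul_inv_wd h).reduce_eq]
  simp

theorem norm_wd (α : List Λ) : norm (wd α) = α.length := by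
  simpa [wd] using norm_wd_mul_inv_wd (α := α) (β := []) (by simp)

theorem toWord_eq_of_norm_eq {g : FreeGroup Λ} {α β : List Λ} (hg : g = wd α * (wd β)⁻¹)
    (hn : norm g = α.length + β.length) :
    g.toWord = α.map (fun a => (a, true)) ++ invRev (β.map fun a => (a, true)) := by
  rw [hg, wd_mul_inv_wd_eq_mk, FreeGroup.norm, toWord_mk] at hn
  rw [hg, wd_mul_inv_wd_eq_mk, toWord_mk]
  refine reduce.red.sublist.eq_of_length ?_
  rw [hn]
  simp

theorem eq_of_reduced_presentations {g : FreeGroup Λ} {α β α' β' : List Λ}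
    (hg : g = wd α * (wd β)⁻¹) (hn : norm g = α.length + β.length)
    (hg' : g = wd α' * (wd β')⁻¹) (hn' : norm g = α'.length + β'.length) :
    α = α' ∧ β = β' := by
  have hw := (toWord_eq_of_norm_eq hg hn).symm.trans (toWord_eq_of_norm_eq hg' hn')
  have hpos : ∀ γ δ : List Λ,
      (γ.map (fun a => (a, true)) ++ invRev (δ.map fun a => (a, true))).filter (·.2) =
        γ.map fun a => (a, true) := by
    intro γ δ
    simp [List.filter_append, invRev_map_true, List.filter_map, Function.comp_def]
  have hinj : Function.Injective fun a : Λ => (a, true) := fun _ _ h => (Prod.mk.inj h).1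
  have hα : α = α' := List.map_injective_iff.2 hinj (by rw [← hpos α β, hw, hpos])
  subst hα
  exact ⟨rfl, List.map_injective_iff.2 hinj (invRev_injective (List.append_cancel_left hw))⟩

theorem wd_injective : Function.Injective (wd : List Λ → FreeGroup Λ) := fun α β h =>
  (eq_of_reduced_presentations (g := wd α) (β := []) (β' := []) (by simp [wd])
    (by simp [norm_wd]) (by rw [h]; simp [wd]) (by simp [h, norm_wd])).1

end ReducedForm

section Subshift

variable [TopologicalSpace Λ] {X : Set (ℕ → Λ)}

theorem IsSubshift.tail_mem (hX : IsSubshift X) {x : ℕ → Λ} (hx : x ∈ X) (n : ℕ) :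
    tail x n ∈ X := by
  induction n with
  | zero =>
    convert hx using 1
    funext i
    simp [tail]
  | succ n ih =>
    convert hX.2.2 _ ih using 1
    funext i
    simp only [tail, shiftMap]
    congr 1
    omega

theorem IsSubshift.mem_of_cat_mem (hX : IsSubshift X) {α : List Λ} {y : ℕ → Λ}
    (h : cat α y ∈ X) : y ∈ X :=
  tail_cat α y ▸ hX.tail_mem h α.length

end Subshift

section PartialAction

variable [DecidableEq Λ] {X : Set (ℕ → Λ)}

theorem mem_xiSet_iff {x : ℕ → Λ} {g : FreeGroup Λ} : g ∈ xiSet X x ↔ x ∈ Xg X g := by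
  constructor
  · rintro ⟨α, β, hg, hn, hα, hy⟩
    exact ⟨α, β, hg, hn, _, hy, (cat_tail_of_pref hα).symm⟩
  · rintro ⟨α, β, hg, hn, y, hy, rfl⟩
    exact ⟨α, β, hg, hn, pref_cat α y, by rwa [tail_cat]⟩

theorem xiB_eq_true_iff {x : ℕ → Λ} {g : FreeGroup Λ} : xiB X x g = true ↔ x ∈ Xg X g := by
  simp [xiB, chi, mem_xiSet_iff]

theorem Xg_subset (g : FreeGroup Λ) : Xg X g ⊆ X := by
  rintro _ ⟨α, β, -, -, y, hy, rfl⟩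
  exact hy.1.2

theorem Xg_eq_image_cat {g : FreeGroup Λ} {α β : List Λ} (hg : g = wd α * (wd β)⁻¹)
    (hn : FreeGroup.norm g = α.length + β.length) :
    Xg X g = cat α '' (follower X α ∩ follower X β) := by
  ext x
  constructor
  · rintro ⟨α', β', hg', hn', y, hy, rfl⟩
    obtain ⟨rfl, rfl⟩ := eq_of_reduced_presentations hg hn hg' hn'
    exact ⟨y, hy, rfl⟩
  · rintro ⟨y, hy, rfl⟩
    exact ⟨α, β, hg, hn, y, hy, rfl⟩

variable [TopologicalSpace Λ]

theorem mem_Xg_wd_iff (hX : IsSubshift X) {x : ℕ → Λ} {ρ : List Λ} :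
    x ∈ Xg X (wd ρ) ↔ x ∈ X ∧ Pref ρ x := by
  rw [Xg_eq_image_cat (α := ρ) (β := []) (by simp [wd]) (by simp [norm_wd])]
  constructor
  · rintro ⟨y, ⟨⟨-, hy⟩, -⟩, rfl⟩
    exact ⟨hy, pref_cat ρ y⟩
  · rintro ⟨hx, hρ⟩
    refine ⟨tail x ρ.length, ⟨⟨hX.tail_mem hx _, ?_⟩, hX.tail_mem hx _, ?_⟩,
      cat_tail_of_pref hρ⟩
    · rwa [cat_tail_of_pref hρ]
    · simpa using hX.tail_mem hx _

/-- Cancelling a common last letter `a` of `γ` and `δ` replaces `y` by `a y`. -/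
theorem cat_mem_Xg (hX : IsSubshift X) {γ δ : List Λ} {y : ℕ → Λ}
    (hy : y ∈ follower X γ ∩ follower X δ) : cat γ y ∈ Xg X (wd γ * (wd δ)⁻¹) := by
  by_cases hred : ∀ a ∈ γ.getLast?, ∀ b ∈ δ.getLast?, a ≠ b
  · exact ⟨γ, δ, rfl, norm_wd_mul_inv_wd hred, y, hy, rfl⟩
  push Not at hred
  obtain ⟨a, ha, _, hb, rfl⟩ := hred
  obtain ⟨γ, rfl⟩ := List.getLast?_eq_some_iff.1 ha
  obtain ⟨δ, rfl⟩ := List.getLast?_eq_some_iff.1 hb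
  have hcancel : wd (γ ++ [a]) * (wd (δ ++ [a]))⁻¹ = wd γ * (wd δ)⁻¹ := by
    rw [wd_append, wd_append]
    group
  rw [hcancel, cat_append]
  obtain ⟨⟨-, hγ⟩, -, hδ⟩ := hy
  rw [cat_append] at hγ hδ
  have hay : cat [a] y ∈ X := hX.mem_of_cat_mem hγ
  exact cat_mem_Xg hX ⟨⟨hay, hγ⟩, hay, hδ⟩
termination_by γ.length

theorem cat_mem_Xg_mul (hX : IsSubshift X) {α β : List Λ} {y : ℕ → Λ}
    (hy : y ∈ follower X α ∩ follower X β) {h : FreeGroup Λ} (hβ : cat β y ∈ Xg X h) :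
    cat α y ∈ Xg X (wd α * (wd β)⁻¹ * h) := by
  obtain ⟨γ, δ, rfl, -, z, hz, hβz⟩ := hβ
  rcases le_total γ.length β.length with hle | hle
  · obtain ⟨ρ, rfl, rfl⟩ := exists_append_of_cat_eq_cat hβz hle
    have hg : wd α * (wd (γ ++ ρ))⁻¹ * (wd γ * (wd δ)⁻¹) = wd α * (wd (δ ++ ρ))⁻¹ := by
      rw [wd_append, wd_append]
      group
    rw [hg]
    exact cat_mem_Xg hX ⟨hy.1, hy.1.1, by rw [cat_append]; exact hz.2.2⟩
  · obtain ⟨ρ, rfl, rfl⟩ := exists_append_of_cat_eq_cat hβz.symm hle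
    have hg : wd α * (wd β)⁻¹ * (wd (β ++ ρ) * (wd δ)⁻¹) = wd (α ++ ρ) * (wd δ)⁻¹ := by
      rw [wd_append, wd_append]
      group
    rw [hg, ← cat_append]
    exact cat_mem_Xg hX ⟨⟨hz.1.1, by rw [cat_append]; exact hy.1.2⟩, hz.2⟩

theorem xiB_cat_eq_translate (hX : IsSubshift X) {α β : List Λ} {y : ℕ → Λ}
    (hy : y ∈ follower X α ∩ follower X β) :
    xiB X (cat α y) = translate (wd α * (wd β)⁻¹) (xiB X (cat β y)) := by
  funext h
  rw [translate, Bool.eq_iff_iff, xiB_eq_true_iff, xiB_eq_true_iff]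
  constructor
  · intro hα
    convert cat_mem_Xg_mul hX ⟨hy.2, hy.1⟩ hα using 2
    group
  · intro hβ
    convert cat_mem_Xg_mul hX hy hβ using 2
    group

end PartialAction

section Topology

variable [TopologicalSpace Λ]

theorem continuous_tail (n : ℕ) : Continuous fun x : ℕ → Λ => tail x n :=
  continuous_pi fun _ => continuous_apply _

variable [DiscreteTopology Λ]

theorem continuous_cat (α : List Λ) : Continuous (cat α) :=
  continuous_pi fun n =>
    (continuous_of_discreteTopology (f := α.getD n)).comp (continuous_apply _)

theorem isClosed_image_cat {s : Set (ℕ → Λ)} (hs : IsClosed s) (α : List Λ) :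
    IsClosed (cat α '' s) := by
  have himage : cat α '' s = {x | cat α (tail x α.length) = x} ∩ (tail · α.length) ⁻¹' s := by
    ext x
    constructor
    · rintro ⟨y, hy, rfl⟩
      simpa using hy
    · rintro ⟨hx, hs⟩
      exact ⟨_, hs, hx⟩
  rw [himage]
  exact (isClosed_eq ((continuous_cat α).comp (continuous_tail _)) continuous_id).inter
    (hs.preimage (continuous_tail _))

variable {X : Set (ℕ → Λ)}

theorem isClosed_follower (hX : IsSubshift X) (α : List Λ) : IsClosed (follower X α) :=
  hX.2.1.inter (hX.2.1.preimage (continuous_cat α))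

theorem isClosed_Xg [DecidableEq Λ] (hX : IsSubshift X) (g : FreeGroup Λ) :
    IsClosed (Xg X g) := by
  by_cases hg : ∃ α β : List Λ, g = wd α * (wd β)⁻¹ ∧ FreeGroup.norm g = α.length + β.length
  · obtain ⟨α, β, hg, hn⟩ := hg
    rw [Xg_eq_image_cat hg hn]
    exact isClosed_image_cat ((isClosed_follower hX α).inter (isClosed_follower hX β)) α
  · convert isClosed_empty
    exact Set.eq_empty_of_forall_notMem fun x ⟨α, β, hg', hn, _⟩ => hg ⟨α, β, hg', hn⟩

end Topology

section Spectrum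

theorem pref_ofFn_iff {x y : ℕ → Λ} {n : ℕ} :
    Pref (List.ofFn fun i : Fin n => x i) y ↔ y ∈ PiNat.cylinder x n := by
  simp [Pref, PiNat.mem_cylinder_iff]

theorem mem_closure_of_forall_cylinder [TopologicalSpace Λ] [DiscreteTopology Λ]
    {s : Set (ℕ → Λ)} {x : ℕ → Λ} (h : ∀ n, (PiNat.cylinder x n ∩ s).Nonempty) :
    x ∈ closure s := by
  rw [(PiNat.isTopologicalBasis_cylinders fun _ => Λ).mem_closure_iff]
  rintro _ ⟨z, n, rfl⟩ hx
  rw [← PiNat.mem_cylinder_iff_eq.1 hx]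
  exact h n

variable [DecidableEq Λ] {X : Set (ℕ → Λ)} {ξ : FreeGroup Λ → Bool}

theorem isStem_iff {x : ℕ → Λ} : IsStem ξ x ↔ ∀ ρ, ξ (wd ρ) = true ↔ Pref ρ x := by
  refine ⟨fun h ρ => ⟨fun hρ => ?_, fun hρ => (h.ge ⟨ρ, rfl, hρ⟩).1⟩, fun h => ?_⟩
  · obtain ⟨α, hα, hp⟩ := h.le ⟨hρ, ρ, rfl⟩
    rwa [wd_injective hα]
  · ext g
    constructor
    · rintro ⟨hg, ρ, rfl⟩
      exact ⟨ρ, rfl, (h ρ).1 hg⟩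
    · rintro ⟨ρ, rfl, hρ⟩
      exact ⟨(h ρ).2 hρ, ρ, rfl⟩

theorem exists_xiB_eqOn_of_mem_Omega (hξ : ξ ∈ Omega X) (G : Finset (FreeGroup Λ)) :
    ∃ x ∈ X, ∀ h ∈ G, xiB X x h = ξ h := by
  have hU : IsOpen ((G : Set (FreeGroup Λ)).pi fun h => {ξ h}) :=
    isOpen_set_pi G.finite_toSet fun _ _ => isOpen_discrete _
  obtain ⟨_, hη, x, hx, rfl⟩ := mem_closure_iff.1 hξ _ hU fun _ _ => rfl
  exact ⟨x, hx, hη⟩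

variable [TopologicalSpace Λ]

theorem exists_mem_cylinder_xiB_eqOn (hX : IsSubshift X) (hξ : ξ ∈ Omega X) {x : ℕ → Λ}
    (hst : IsStem ξ x) (G : Finset (FreeGroup Λ)) (n : ℕ) :
    ∃ x' ∈ X, x' ∈ PiNat.cylinder x n ∧ ∀ h ∈ G, xiB X x' h = ξ h := by
  set ρ := List.ofFn fun i : Fin n => x i
  obtain ⟨x', hx', hG⟩ := exists_xiB_eqOn_of_mem_Omega hξ (insert (wd ρ) G)
  have hρ : xiB X x' (wd ρ) = true := by
    rw [hG _ (Finset.mem_insert_self _ _), isStem_iff.1 hst]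
    exact pref_ofFn_iff.2 (PiNat.self_mem_cylinder x n)
  rw [xiB_eq_true_iff, mem_Xg_wd_iff hX] at hρ
  exact ⟨x', hx', pref_ofFn_iff.1 hρ.2, fun h hh => hG h (Finset.mem_insert_of_mem hh)⟩

theorem IsStem.translate_cat (hX : IsSubshift X) (hξ : ξ ∈ Omega X) {α β : List Λ}
    {y : ℕ → Λ} (hst : IsStem ξ (cat β y)) (hg : ξ (wd α * (wd β)⁻¹)⁻¹ = true)
    (hn : FreeGroup.norm (wd α * (wd β)⁻¹) = α.length + β.length) :
    IsStem (translate (wd α * (wd β)⁻¹) ξ) (cat α y) := by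
  set g := wd α * (wd β)⁻¹
  have hg' : g⁻¹ = wd β * (wd α)⁻¹ := by simp [g]
  have hn' : FreeGroup.norm g⁻¹ = β.length + α.length := by
    rw [FreeGroup.norm_inv_eq, hn, add_comm]
  refine isStem_iff.2 fun ρ => ?_
  obtain ⟨x', -, hcyl, hG⟩ :=
    exists_mem_cylinder_xiB_eqOn hX hξ hst {g⁻¹, g⁻¹ * wd ρ} (β.length + ρ.length)
  have hx' : x' ∈ Xg X g⁻¹ := xiB_eq_true_iff.1 ((hG _ (by simp)).trans hg)
  rw [Xg_eq_image_cat hg' hn'] at hx'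
  obtain ⟨z, hz, rfl⟩ := hx'
  have hcyl' : cat α z ∈ PiNat.cylinder (cat α y) ρ.length :=
    PiNat.cylinder_anti _ (by omega)
      (cat_mem_cylinder_cat_iff.2 (cat_mem_cylinder_cat_iff.1 hcyl))
  calc translate g ξ (wd ρ) = true ↔ xiB X (cat β z) (g⁻¹ * wd ρ) = true := by
        rw [hG _ (by simp)]
        rfl
    _ ↔ xiB X (cat α z) (wd ρ) = true := by
        rw [xiB_cat_eq_translate hX ⟨hz.2, hz.1⟩]
        rfl
    _ ↔ Pref ρ (cat α y) := by
        rw [xiB_eq_true_iff, mem_Xg_wd_iff hX, ← pref_iff_of_mem_cylinder hcyl']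
        exact and_iff_right hz.2.2

variable [DiscreteTopology Λ]

theorem IsStem.mem_Xg (hX : IsSubshift X) (hξ : ξ ∈ Omega X) {x : ℕ → Λ} (hst : IsStem ξ x)
    {g : FreeGroup Λ} (hg : ξ g = true) : x ∈ Xg X g := by
  rw [← (isClosed_Xg hX g).closure_eq]
  refine mem_closure_of_forall_cylinder fun n => ?_
  obtain ⟨x', -, hcyl, hG⟩ := exists_mem_cylinder_xiB_eqOn hX hξ hst {g} n
  exact ⟨x', hcyl, xiB_eq_true_iff.1 ((hG g (Finset.mem_singleton_self g)).trans hg)⟩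

end Spectrum

theorem equivariance_general {Λ : Type} [DecidableEq Λ]
    [TopologicalSpace Λ] [DiscreteTopology Λ]
    (X : Set (ℕ → Λ)) (hX : IsSubshift X) (g : FreeGroup Λ) :
    ((fun x => xiB X x) '' Xg X g ⊆ {ξ ∈ Omega X | ξ g = true}) ∧
    (∀ α β : List Λ, g = wd α * (wd β)⁻¹ →
        FreeGroup.norm g = α.length + β.length →
        ∀ y ∈ follower X α ∩ follower X β,
          xiB X (cat α y) = translate g (xiB X (cat β y))) ∧
    (∀ ξ ∈ Omega X, ξ g = true → ∀ x : ℕ → Λ, IsStem ξ x → x ∈ Xg X g) ∧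
    (∀ ξ ∈ Omega X, ξ g⁻¹ = true → ∀ x : ℕ → Λ, IsStem ξ x →
        ∀ α β : List Λ, g = wd α * (wd β)⁻¹ →
          FreeGroup.norm g = α.length + β.length →
          ∀ y : ℕ → Λ, x = cat β y → IsStem (translate g ξ) (cat α y)) := by
  refine ⟨?_, fun α β hg _ y hy => hg ▸ xiB_cat_eq_translate hX hy,
    fun ξ hξ hg x hst => hst.mem_Xg hX hξ hg, ?_⟩
  · rintro _ ⟨x, hx, rfl⟩
    exact ⟨subset_closure ⟨x, Xg_subset g hx, rfl⟩, xiB_eq_true_iff.2 hx⟩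
  · rintro ξ hξ hg x hst α β rfl hn y rfl
    exact hst.translate_cat hX hξ hg hn

/-- `Ξ` and the stem map `σ` are equivariant with respect to the standard
partial action on `X` and the spectral partial action on `Ω_X`. -/
theorem equivariance {Λ : Type} [Fintype Λ] [Nonempty Λ] [DecidableEq Λ]
    [TopologicalSpace Λ] [DiscreteTopology Λ]
    (X : Set (ℕ → Λ)) (hX : IsSubshift X) (g : FreeGroup Λ) :
    ((fun x => xiB X x) '' Xg X g ⊆ {ξ ∈ Omega X | ξ g = true}) ∧
    (∀ α β : List Λ, g = wd α * (wd β)⁻¹ →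
        FreeGroup.norm g = α.length + β.length →
        ∀ y ∈ follower X α ∩ follower X β,
          xiB X (cat α y) = translate g (xiB X (cat β y))) ∧
    (∀ ξ ∈ Omega X, ξ g = true → ∀ x : ℕ → Λ, IsStem ξ x → x ∈ Xg X g) ∧
    (∀ ξ ∈ Omega X, ξ g⁻¹ = true → ∀ x : ℕ → Λ, IsStem ξ x →
        ∀ α β : List Λ, g = wd α * (wd β)⁻¹ →
          FreeGroup.norm g = α.length + β.length →
          ∀ y : ℕ → Λ, x = cat β y → IsStem (translate g ξ) (cat α y)) :=
  equivariance_general X hX g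

end SubshiftPaper
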